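/- For every ordinal α < ε₀, the Hardy function H_α : ℕ → ℕ is weakly monotone increasing: for all natural numbers x ≤ y, H_α(x) ≤ H_α(y). -/

import Mathlib

open ONote in
/-- `α` is a successor ordinal notation (its Cantor normal form ends with `ω^0·m`). -/
def ONote.isSucc : ONote → Prop
  | ONote.zero => False
  | ONote.oadd e _ ONote.zero => e = 0
  | ONote.oadd _ _ (ONote.oadd e n a) => ONote.isSucc (ONote.oadd e n a)

instance : DecidablePred ONote.isSucc := by
  intro a
  induction a with
  | zero => exact .isFalse (by simp [ONote.isSucc])
  | oadd e n a ihe iha =>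
    cases a with
    | zero => exact decidable_of_iff (e = 0) Iff.rfl
    | oadd e' n' a' => exact iha

/-- The standard fundamental sequence assignment `α[x]` on Cantor normal forms:
`0[x] = 0`, `(α+1)[x] = α`, and for `λ` with last term `ω^(β+1)` one has
`λ[x] = (λ - ω^(β+1)) + ω^β·x`, while for last term `ω^γ` (`γ` limit),
`λ[x] = (λ - ω^γ) + ω^(γ[x])`. -/
def ONote.fseq : ONote → ℕ → ONote
  | ONote.zero, _ => ONote.zero
  | ONote.oadd e m (ONote.oadd e' m' a'), x =>
      ONote.oadd e m (ONote.fseq (ONote.oadd e' m' a') x)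
  | ONote.oadd ONote.zero m ONote.zero, _ =>
      if _h : m = 1 then ONote.zero else ONote.oadd ONote.zero (m - 1) ONote.zero
  | ONote.oadd (ONote.oadd e1 m1 a1) m ONote.zero, x =>
      let e := ONote.oadd e1 m1 a1
      let tail : ONote → ONote :=
        fun t => if m = 1 then t else ONote.oadd e (m - 1) t
      if ONote.isSucc e then
        match x with
        | 0 => tail ONote.zero
        | Nat.succ y => tail (ONote.oadd (ONote.fseq e (y+1)) (Nat.succPNat y) ONote.zero)
      else tail (ONote.oadd (ONote.fseq e x) 1 ONote.zero)

/-- `α <_n β` : transitive closure of `α = β[n]`. -/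
def ONote.stepLt (n : ℕ) (a b : ONote) : Prop :=
  Relation.TransGen (fun x y => x = ONote.fseq y n) a b

/-- `α ≤_n β`. -/
def ONote.stepLe (n : ℕ) (a b : ONote) : Prop :=
  ONote.stepLt n a b ∨ a = b

/-- The graph of the Hardy hierarchy: `H_0(x) = x`, `H_{α+1}(x) = H_α(x+1)`,
`H_λ(x) = H_{λ[x]}(x)` for limit `λ`. -/
inductive HardyRel : ONote → ℕ → ℕ → Prop
  | zero (x : ℕ) : HardyRel ONote.zero x x
  | succ {a : ONote} {x y : ℕ} (h : a.isSucc) (hrec : HardyRel (a.fseq x) (x + 1) y) :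
      HardyRel a x y
  | limit {a : ONote} {x y : ℕ} (h0 : a ≠ ONote.zero) (h : ¬ a.isSucc)
      (hrec : HardyRel (a.fseq x) x y) : HardyRel a x y

open scoped Classical in
/-- The Hardy function `H_α : ℕ → ℕ` (for `α` in normal form the defining
recursion terminates, so `hardy` is the unique value of the graph `HardyRel`). -/
noncomputable def hardy (a : ONote) (x : ℕ) : ℕ :=
  if h : ∃ y, HardyRel a x y then h.choose else 0

/-! Induction on `α`, proving together with monotonicity of `H_α` that `β ≤_n α` implies
`H_β(n) ≤ H_α(n)`; for the latter it suffices that one descent step `α ↦ α[n]` does not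
increase `H_·(n)`, which is monotonicity of `H_{α[n]}`. At a limit `λ` one then gets
`H_{λ[x]}(x) ≤ H_{λ[x]}(x+1) ≤ H_{λ[x+1]}(x+1)`, the second step by the Bachmann property
`λ[x] ≤_{x+1} λ[x+1]` of the standard fundamental sequences. -/

namespace ONote

/-- `ω^e·(m-1) + t`, the common shape of `(ω^e·m)[x]`. -/
def oaddPred (e : ONote) (m : ℕ+) (t : ONote) : ONote :=
  if m = 1 then t else oadd e (m - 1) t

theorem oaddPred_add_one (e : ONote) (k : ℕ+) (t : ONote) :
    oaddPred e (k + 1) t = oadd e k t := by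
  rw [oaddPred, if_neg (PNat.lt_add_left 1 k).ne', PNat.add_sub]

theorem NF.oaddPred {e t : ONote} (he : NF e) (ht : NFBelow t (repr e)) (m : ℕ+) :
    NF (oaddPred e m t) := by
  unfold ONote.oaddPred
  split_ifs
  · exact ⟨⟨_, ht⟩⟩
  · exact he.oadd _ ht

theorem oaddPred_lt {e t : ONote} (he : NF e) (ht : NFBelow t (repr e)) (m : ℕ+) :
    oaddPred e m t < oadd e m 0 := by
  unfold oaddPred
  split_ifs with hm
  · rw [lt_def, repr, hm, PNat.one_coe, Nat.cast_one, mul_one, repr_zero, add_zero]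
    exact ht.repr_lt
  · refine oadd_lt_oadd_2 (he.oadd _ ht) ?_
    rw [PNat.sub_coe, if_pos (lt_of_le_of_ne one_le (Ne.symm hm))]
    exact Nat.sub_lt m.pos one_pos

theorem fseq_zero (x : ℕ) : fseq 0 x = 0 := by simp [fseq]

theorem fseq_oadd_oadd (e : ONote) (m : ℕ+) (e' : ONote) (m' : ℕ+) (a' : ONote) (x : ℕ) :
    fseq (oadd e m (oadd e' m' a')) x = oadd e m (fseq (oadd e' m' a') x) := by
  simp [fseq]

theorem fseq_oadd_zero_zero (m : ℕ+) (x : ℕ) : fseq (oadd 0 m 0) x = oaddPred 0 m 0 := by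
  simp [fseq, oaddPred]

theorem fseq_oadd_zero_of_isSucc {e : ONote} (he : isSucc e) (m : ℕ+) :
    fseq (oadd e m 0) 0 = oaddPred e m 0 := by
  cases e with
  | zero => exact absurd he not_false
  | oadd => simp [fseq, oaddPred, he]

theorem fseq_oadd_succ_of_isSucc {e : ONote} (he : isSucc e) (m : ℕ+) (y : ℕ) :
    fseq (oadd e m 0) (y + 1) = oaddPred e m (oadd (fseq e (y + 1)) y.succPNat 0) := by
  cases e with
  | zero => exact absurd he not_false
  | oadd => simp [fseq, oaddPred, he]

theorem fseq_oadd_of_not_isSucc {e : ONote} (he0 : e ≠ 0) (he : ¬isSucc e) (m : ℕ+) (x : ℕ) :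
    fseq (oadd e m 0) x = oaddPred e m (oadd (fseq e x) 1 0) := by
  cases e with
  | zero => exact absurd rfl he0
  | oadd => simp [fseq, oaddPred, he]

theorem exists_fseq_oadd_zero_eq_oaddPred (e : ONote) (m : ℕ+) (x : ℕ) :
    ∃ t, fseq (oadd e m 0) x = oaddPred e m t ∧
      (t = 0 ∨ e ≠ 0 ∧ ∃ j k, t = oadd (fseq e j) k 0) := by
  by_cases he0 : e = 0
  · exact ⟨0, he0 ▸ fseq_oadd_zero_zero m x, Or.inl rfl⟩
  by_cases he : isSucc e
  · cases x with
    | zero => exact ⟨0, fseq_oadd_zero_of_isSucc he m, Or.inl rfl⟩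
    | succ y => exact ⟨_, fseq_oadd_succ_of_isSucc he m y, Or.inr ⟨he0, _, _, rfl⟩⟩
  · exact ⟨_, fseq_oadd_of_not_isSucc he0 he m x, Or.inr ⟨he0, _, _, rfl⟩⟩

theorem fseq_eq_of_isSucc {a : ONote} (h : isSucc a) (x y : ℕ) : fseq a x = fseq a y := by
  induction a with
  | zero => rfl
  | oadd e m t _ iht =>
    cases t with
    | zero =>
      obtain rfl : e = 0 := h
      rw [zero_def, fseq_oadd_zero_zero, fseq_oadd_zero_zero]
    | oadd => rw [fseq_oadd_oadd, fseq_oadd_oadd, iht h]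

theorem nf_fseq_and_fseq_lt {a : ONote} (ha : NF a) (x : ℕ) :
    NF (fseq a x) ∧ (a ≠ 0 → fseq a x < a) := by
  induction a generalizing x with
  | zero => exact ⟨NF.zero, fun h => absurd rfl h⟩
  | oadd e m t ihe iht =>
    cases t with
    | oadd e' m' a' =>
      obtain ⟨hnf, hlt⟩ := iht ha.snd x
      have hlt' : fseq (oadd e' m' a') x < oadd e' m' a' := hlt nofun
      rw [fseq_oadd_oadd]
      exact ⟨ha.fst.oadd _ (NF.below_of_lt' ((lt_def.1 hlt').trans ha.snd'.repr_lt) hnf),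
        fun _ => oadd_lt_oadd_3 hlt'⟩
    | zero =>
      obtain ⟨s, hs, hs'⟩ := exists_fseq_oadd_zero_eq_oaddPred e m x
      have hsb : NFBelow s (repr e) := by
        rcases hs' with rfl | ⟨he0, j, k, rfl⟩
        · exact NFBelow.zero
        · obtain ⟨hnf, hlt⟩ := ihe ha.fst j
          exact NFBelow.oadd hnf NFBelow.zero (hlt he0)
      rw [zero_def, hs]
      exact ⟨ha.fst.oaddPred hsb m, fun _ => oaddPred_lt ha.fst hsb m⟩

theorem NF.fseq {a : ONote} (ha : NF a) (x : ℕ) : NF (fseq a x) :=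
  (nf_fseq_and_fseq_lt ha x).1

theorem repr_fseq_lt {a : ONote} (ha : NF a) (h0 : a ≠ 0) (x : ℕ) : repr (fseq a x) < repr a :=
  (nf_fseq_and_fseq_lt ha x).2 h0

theorem stepLe_iff_reflTransGen {n : ℕ} {a b : ONote} :
    stepLe n a b ↔ Relation.ReflTransGen (fun x y => x = fseq y n) a b := by
  rw [Relation.reflTransGen_iff_eq_or_transGen, stepLe, stepLt, or_comm, eq_comm]

@[refl]
theorem stepLe.refl (n : ℕ) (a : ONote) : stepLe n a a := Or.inr rfl

theorem stepLe.trans {n : ℕ} {a b c : ONote} (hab : stepLe n a b) (hbc : stepLe n b c) :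
    stepLe n a c := by
  rw [stepLe_iff_reflTransGen] at *
  exact hab.trans hbc

theorem fseq_stepLe (n : ℕ) (a : ONote) : stepLe n (fseq a n) a := Or.inl (.single rfl)

theorem stepLe.eq_or_stepLe_fseq {n : ℕ} {a b : ONote} (h : stepLe n b a) :
    b = a ∨ stepLe n b (fseq a n) := by
  rw [stepLe_iff_reflTransGen] at *
  rcases Relation.ReflTransGen.cases_tail h with rfl | ⟨c, hbc, rfl⟩
  exacts [Or.inl rfl, Or.inr hbc]

theorem eq_zero_of_stepLe_zero {n : ℕ} {b : ONote} (h : stepLe n b 0) : b = 0 := by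
  rw [stepLe_iff_reflTransGen] at h
  induction h using Relation.ReflTransGen.head_induction_on with
  | refl => rfl
  | head hbc _ ih => rw [hbc, ih, fseq_zero]

theorem stepLe.nf {n : ℕ} {a b : ONote} (h : stepLe n a b) (hb : NF b) : NF a := by
  rw [stepLe_iff_reflTransGen] at h
  induction h with
  | refl => exact hb
  | tail _ hcd ih => exact ih (hcd ▸ hb.fseq n)

theorem stepLe.oadd_tail {n : ℕ} {s t : ONote} (h : stepLe n s t) (e : ONote) (m : ℕ+) :
    stepLe n (oadd e m s) (oadd e m t) := by
  rw [stepLe_iff_reflTransGen] at *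
  refine h.lift' (oadd e m) fun s t hst => ?_
  cases t with
  | zero => rw [hst, zero_def, fseq_zero]
  | oadd => exact .single (by rw [hst, fseq_oadd_oadd])

theorem stepLe.oaddPred_tail {n : ℕ} {s t : ONote} (h : stepLe n s t) (e : ONote) (m : ℕ+) :
    stepLe n (oaddPred e m s) (oaddPred e m t) := by
  unfold ONote.oaddPred
  split_ifs
  exacts [h, h.oadd_tail e _]

theorem zero_stepLe (n : ℕ) {a : ONote} (ha : NF a) : stepLe n 0 a := by
  induction a using (InvImage.wf repr wellFounded_lt).induction with
  | _ a ih =>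
  rcases eq_or_ne a 0 with rfl | h0
  · rfl
  · exact (ih _ (repr_fseq_lt ha h0 n) (ha.fseq n)).trans (fseq_stepLe n a)

theorem oadd_stepLe_oadd_add_one (n : ℕ) {p : ONote} (hp : NF p) (k : ℕ+) :
    stepLe n (oadd p k 0) (oadd p (k + 1) 0) := by
  obtain ⟨t, ht, ht'⟩ := exists_fseq_oadd_zero_eq_oaddPred p (k + 1) n
  have htnf : NF t := by
    rcases ht' with rfl | ⟨-, j, k, rfl⟩
    exacts [NF.zero, (hp.fseq j).oadd k NFBelow.zero]
  have hstep := fseq_stepLe n (oadd p (k + 1) 0)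
  rw [ht, oaddPred_add_one] at hstep
  exact ((zero_stepLe n htnf).oadd_tail p k).trans hstep

theorem oadd_stepLe_oadd_of_le (n : ℕ) {p : ONote} (hp : NF p) {j k : ℕ+} (hjk : j ≤ k) :
    stepLe n (oadd p j 0) (oadd p k 0) := by
  induction k using PNat.recOn with
  | one => rw [le_antisymm hjk one_le]
  | succ k ih =>
    rcases hjk.eq_or_lt with rfl | hlt
    · rfl
    · exact (ih (PNat.lt_add_one_iff.1 hlt)).trans (oadd_stepLe_oadd_add_one n hp k)

theorem oadd_fseq_stepLe_oadd {u : ONote} (hu : NF u) (y : ℕ) :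
    stepLe (y + 1) (oadd (fseq u (y + 1)) 1 0) (oadd u 1 0) := by
  rcases eq_or_ne u 0 with rfl | hu0
  · rw [fseq_zero]
  have hstep := fseq_stepLe (y + 1) (oadd u 1 0)
  by_cases hs : isSucc u
  · rw [fseq_oadd_succ_of_isSucc hs, oaddPred, if_pos rfl] at hstep
    exact (oadd_stepLe_oadd_of_le _ (hu.fseq _) one_le).trans hstep
  · rwa [fseq_oadd_of_not_isSucc hu0 hs, oaddPred, if_pos rfl] at hstep

theorem stepLe.oadd_exp {y : ℕ} {b c : ONote} (h : stepLe (y + 1) b c) (hc : NF c) :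
    stepLe (y + 1) (oadd b 1 0) (oadd c 1 0) := by
  rw [stepLe_iff_reflTransGen] at h
  induction h using Relation.ReflTransGen.head_induction_on with
  | refl => rfl
  | head hbd hdc ih =>
    rw [hbd]
    exact (oadd_fseq_stepLe_oadd ((stepLe_iff_reflTransGen.2 hdc).nf hc) y).trans ih

theorem fseq_stepLe_fseq_add_one {c : ONote} (hc : NF c) (x : ℕ) :
    stepLe (x + 1) (fseq c x) (fseq c (x + 1)) := by
  induction c with
  | zero => rw [zero_def, fseq_zero, fseq_zero]
  | oadd e m t ihe iht =>
    cases t with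
    | oadd => rw [fseq_oadd_oadd, fseq_oadd_oadd]; exact (iht hc.snd).oadd_tail e m
    | zero =>
      rw [zero_def]
      rcases eq_or_ne e 0 with rfl | he0
      · rw [fseq_oadd_zero_zero, fseq_oadd_zero_zero]
      by_cases hs : isSucc e
      · cases x with
        | zero =>
          rw [fseq_oadd_zero_of_isSucc hs, fseq_oadd_succ_of_isSucc hs]
          exact (zero_stepLe _ ((hc.fst.fseq _).oadd _ NFBelow.zero)).oaddPred_tail e m
        | succ x =>
          rw [fseq_oadd_succ_of_isSucc hs, fseq_oadd_succ_of_isSucc hs,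
            fseq_eq_of_isSucc hs (x + 1) (x + 2)]
          refine (oadd_stepLe_oadd_of_le _ (hc.fst.fseq _) ?_).oaddPred_tail e m
          rw [← PNat.coe_le_coe]
          simp
      · rw [fseq_oadd_of_not_isSucc he0 hs, fseq_oadd_of_not_isSucc he0 hs]
        exact ((ihe hc.fst).oadd_exp (hc.fst.fseq _)).oaddPred_tail e m

end ONote

open ONote

theorem hardyRel_unique {a : ONote} {x y y' : ℕ} (h : HardyRel a x y) (h' : HardyRel a x y') :
    y = y' := by
  induction h generalizing y' with
  | zero => cases h' <;> first | rfl | contradiction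
  | succ hs _ ih => cases h' <;> first | contradiction | exact ih ‹_›
  | limit h0 hs _ ih => cases h' <;> first | contradiction | exact ih ‹_›

theorem exists_hardyRel {a : ONote} (ha : NF a) (x : ℕ) : ∃ y, HardyRel a x y := by
  induction a using (InvImage.wf repr wellFounded_lt).induction generalizing x with
  | _ a ih =>
  rcases eq_or_ne a 0 with rfl | h0
  · exact ⟨x, .zero x⟩
  have ih' (z : ℕ) := ih _ (repr_fseq_lt ha h0 x) (ha.fseq x) z
  by_cases hs : isSucc a
  · exact (ih' (x + 1)).imp fun _ => .succ hs
  · exact (ih' x).imp fun _ => .limit h0 hs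

theorem hardy_eq_of_hardyRel {a : ONote} {x y : ℕ} (h : HardyRel a x y) : hardy a x = y := by
  have hex : ∃ y, HardyRel a x y := ⟨y, h⟩
  rw [hardy, dif_pos hex]
  exact hardyRel_unique hex.choose_spec h

theorem hardy_zero (x : ℕ) : hardy 0 x = x := hardy_eq_of_hardyRel (.zero x)

theorem hardy_of_isSucc {a : ONote} (ha : NF a) (hs : isSucc a) (x : ℕ) :
    hardy a x = hardy (fseq a x) (x + 1) := by
  obtain ⟨y, hy⟩ := exists_hardyRel (ha.fseq x) (x + 1)
  rw [hardy_eq_of_hardyRel hy, hardy_eq_of_hardyRel (.succ hs hy)]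

theorem hardy_of_not_isSucc {a : ONote} (ha : NF a) (h0 : a ≠ 0) (hs : ¬isSucc a) (x : ℕ) :
    hardy a x = hardy (fseq a x) x := by
  obtain ⟨y, hy⟩ := exists_hardyRel (ha.fseq x) x
  rw [hardy_eq_of_hardyRel hy, hardy_eq_of_hardyRel (.limit h0 hs hy)]

theorem hardy_fseq_le {a : ONote} (ha : NF a) (n : ℕ) (hmono : Monotone (hardy (fseq a n))) :
    hardy (fseq a n) n ≤ hardy a n := by
  rcases eq_or_ne a 0 with rfl | h0
  · rw [fseq_zero]
  by_cases hs : isSucc a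
  · rw [hardy_of_isSucc ha hs]
    exact hmono n.le_succ
  · rw [hardy_of_not_isSucc ha h0 hs]

theorem monotone_hardy_and_hardy_le_of_stepLe {a : ONote} (ha : NF a) :
    Monotone (hardy a) ∧ ∀ n b, stepLe n b a → hardy b n ≤ hardy a n := by
  induction a using (InvImage.wf repr wellFounded_lt).induction with
  | _ a ih =>
  rcases eq_or_ne a 0 with rfl | h0
  · refine ⟨fun x y hxy => ?_, fun n b hb => by rw [eq_zero_of_stepLe_zero hb]⟩
    rwa [hardy_zero, hardy_zero]
  have ih' (x : ℕ) := ih _ (repr_fseq_lt ha h0 x) (ha.fseq x)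
  refine ⟨monotone_nat_of_le_succ fun x => ?_, fun n b hb => ?_⟩
  · by_cases hs : isSucc a
    · rw [hardy_of_isSucc ha hs, hardy_of_isSucc ha hs, fseq_eq_of_isSucc hs x (x + 1)]
      exact (ih' (x + 1)).1 (x + 1).le_succ
    · rw [hardy_of_not_isSucc ha h0 hs, hardy_of_not_isSucc ha h0 hs]
      calc hardy (fseq a x) x ≤ hardy (fseq a x) (x + 1) := (ih' x).1 x.le_succ
        _ ≤ hardy (fseq a (x + 1)) (x + 1) :=
          (ih' (x + 1)).2 _ _ (fseq_stepLe_fseq_add_one ha x)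
  · rcases hb.eq_or_stepLe_fseq with rfl | hb
    · rfl
    · exact ((ih' n).2 n b hb).trans (hardy_fseq_le ha n (ih' n).1)

/-- each Hardy function `H_α` (`α < ε₀`) is weakly monotone. -/
theorem hardy_monotone (a : ONote) (hNF : a.NF) :
    ∀ x y : ℕ, x ≤ y → hardy a x ≤ hardy a y :=
  fun _ _ hxy => (monotone_hardy_and_hardy_le_of_stepLe hNF).1 hxy
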